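/- arXiv:1912.05167 — 5 statements merged into one kernel-verified Lean document; each statement's English description precedes it below -/
import Mathlib

section
/- Let E be the Hesse cubic V(x^3+y^3+z^3-3λxyz) with zero o_E = (1:-1:0). For a point p = (a:b:c) ∈ E which is not 3-torsion, p is 2-torsion if and only if a = b. -/
open scoped Classical

noncomputable section

/-- Affine representatives `(a, b, c)` of points `(a : b : c)` of `ℙ²`. -/
abbrev Pt (k : Type*) := k × k × k

variable {k : Type*} [Field k]

/-- Projective equality of representatives: `q` is a nonzero scalar multiple of `p`. -/
def projEq (p q : Pt k) : Prop :=
  ∃ t : k, t ≠ 0 ∧ q = (t * p.1, t * p.2.1, t * p.2.2)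

/-- The Hesse cubic `x³ + y³ + z³ - 3λxyz = 0`. -/
def onHesse (lam : k) (p : Pt k) : Prop :=
  p.1 ^ 3 + p.2.1 ^ 3 + p.2.2 ^ 3 - 3 * lam * p.1 * p.2.1 * p.2.2 = 0

/-- The zero element `o_E = (1 : -1 : 0)` of the group law. -/
def oE : Pt k := (1, -1, 0)

/-- First chord formula for the addition on the Hesse cubic:
`p + q = (acβ² - b²αγ : bcα² - a²βγ : abγ² - c²αβ)`. -/
def add1 (p q : Pt k) : Pt k :=
  (p.1 * p.2.2 * q.2.1 ^ 2 - p.2.1 ^ 2 * q.1 * q.2.2,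
   p.2.1 * p.2.2 * q.1 ^ 2 - p.1 ^ 2 * q.2.1 * q.2.2,
   p.1 * p.2.1 * q.2.2 ^ 2 - p.2.2 ^ 2 * q.1 * q.2.1)

/-- Alternate chord formula for the addition on the Hesse cubic:
`p + q = (abα² - c²βγ : acγ² - b²αβ : bcβ² - a²αγ)`. -/
def add2 (p q : Pt k) : Pt k :=
  (p.1 * p.2.1 * q.1 ^ 2 - p.2.2 ^ 2 * q.2.1 * q.2.2,
   p.1 * p.2.2 * q.2.2 ^ 2 - p.2.1 ^ 2 * q.1 * q.2.1,
   p.2.1 * p.2.2 * q.2.1 ^ 2 - p.1 ^ 2 * q.1 * q.2.2)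

/-- The addition on the Hesse cubic: use the first formula when it is defined
(nonzero), otherwise the alternate one. -/
def hesseAdd (p q : Pt k) : Pt k :=
  if add1 p q ≠ (0, 0, 0) then add1 p q else add2 p q

/-- The inverse `(a : b : c) ↦ (b : a : c)`. -/
def hesseNeg (p : Pt k) : Pt k := (p.2.1, p.1, p.2.2)

/-- Subtraction: `p - q = p + (-q)`. -/
def hesseSub (p q : Pt k) : Pt k := hesseAdd p (hesseNeg q)

/-- `nP n p` is a representative of `np = p + ⋯ + p` (`n` summands). -/
def nP : ℕ → Pt k → Pt k
  | 0, _ => oE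
  | n + 1, p => hesseAdd (nP n p) p

/-- `p` is an `n`-torsion point: `np = o_E`. -/
def isTor (n : ℕ) (p : Pt k) : Prop := projEq (nP n p) (oE : Pt k)

/-! A point `(a : b : 0)` of the curve has `b³ = -a³`, so it lies on the line at infinity together
with `o_E`, and the chord formulas show it is a flex: `3p = o_E`. So `c ≠ 0`, and then
`2p = (bc²(a³ - c³) : ac²(c³ - b³) : c³(b³ - a³))`, which is `o_E` exactly when `a = b ≠ 0` and
`a³ ≠ c³`. On the curve, `a = b` forces the last two conditions once `λ³ ≠ 1` and `3 ≠ 0`. -/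

lemma hesseAdd_of_add1_eq_zero {p q : Pt k} (h : add1 p q = (0, 0, 0)) :
    hesseAdd p q = add2 p q := by
  rw [hesseAdd, if_neg (not_not_intro h)]

lemma hesseAdd_of_add1_ne_zero {p q : Pt k} (h : add1 p q ≠ (0, 0, 0)) :
    hesseAdd p q = add1 p q :=
  if_pos h

lemma projEq_oE_iff {p : Pt k} : projEq p oE ↔ p.1 ≠ 0 ∧ p.2.1 = -p.1 ∧ p.2.2 = 0 := by
  obtain ⟨x, y, z⟩ := p
  simp only [projEq, oE, Prod.mk.injEq]
  constructor
  · rintro ⟨t, ht, hx, hy, hz⟩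
    refine ⟨right_ne_zero_of_mul (hx ▸ one_ne_zero), ?_, ?_⟩
    · exact mul_left_cancel₀ ht (by linear_combination -hy - hx)
    · exact (mul_eq_zero.mp hz.symm).resolve_left ht
  · rintro ⟨hx, rfl, rfl⟩
    exact ⟨x⁻¹, inv_ne_zero hx, by field_simp, by field_simp, by simp⟩

lemma nP_two_of_ne_zero {a b c : k} (hc : c ≠ 0) :
    nP 2 ((a, b, c) : Pt k) =
      (b * c ^ 2 * (a ^ 3 - c ^ 3), a * c ^ 2 * (c ^ 3 - b ^ 3), c ^ 3 * (b ^ 3 - a ^ 3)) := by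
  have h0 : add1 (oE : Pt k) (a, b, c) = (-(a * c), -(b * c), -(c * c)) := by
    simp only [add1, oE, Prod.mk.injEq]; refine ⟨by ring, by ring, by ring⟩
  have h1 : nP 1 ((a, b, c) : Pt k) = (-(a * c), -(b * c), -(c * c)) := by
    rw [nP, nP, hesseAdd_of_add1_ne_zero (by simp [h0, hc]), h0]
  have h2 : add1 ((-(a * c), -(b * c), -(c * c)) : Pt k) (a, b, c) = (0, 0, 0) := by
    simp only [add1, Prod.mk.injEq]; refine ⟨by ring, by ring, by ring⟩
  rw [nP, h1, hesseAdd_of_add1_eq_zero h2]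
  simp only [add2, Prod.mk.injEq]; refine ⟨by ring, by ring, by ring⟩

lemma nP_three_of_third_eq_zero (a b : k) :
    nP 3 ((a, b, 0) : Pt k) = (-(a ^ 10 * b ^ 4), -(a ^ 7 * b ^ 7), 0) := by
  have hadd1 : ∀ p : Pt k, p.2.2 = 0 → add1 p (a, b, 0) = (0, 0, 0) := by
    rintro ⟨x, y, z⟩ (rfl : z = 0)
    simp [add1]
  have h1 : nP 1 ((a, b, 0) : Pt k) = (-(a ^ 2), -(a * b), 0) := by
    rw [nP, nP, hesseAdd_of_add1_eq_zero (hadd1 _ rfl)]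
    simp only [add2, oE, Prod.mk.injEq]; refine ⟨by ring, by ring, by ring⟩
  have h2 : nP 2 ((a, b, 0) : Pt k) = (a ^ 5 * b, -(a ^ 3 * b ^ 3), 0) := by
    rw [nP, h1, hesseAdd_of_add1_eq_zero (hadd1 _ rfl)]
    simp only [add2, Prod.mk.injEq]; refine ⟨by ring, by ring, by ring⟩
  rw [nP, h2, hesseAdd_of_add1_eq_zero (hadd1 _ rfl)]
  simp only [add2, Prod.mk.injEq]; refine ⟨by ring, by ring, by ring⟩

lemma isTor_three_of_onHesse_of_third_eq_zero {lam a b : k}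
    (hE : onHesse lam ((a, b, 0) : Pt k)) (hne : ((a, b, 0) : Pt k) ≠ (0, 0, 0)) :
    isTor 3 ((a, b, 0) : Pt k) := by
  have hE : a ^ 3 + b ^ 3 = 0 := by simpa [onHesse] using hE
  have ha : a ≠ 0 := by
    rintro rfl
    exact hne (by simpa using (pow_eq_zero_iff three_ne_zero).mp (by simpa using hE))
  have hb : b ≠ 0 := by
    rintro rfl
    exact ha ((pow_eq_zero_iff three_ne_zero).mp (by simpa using hE))
  rw [isTor, nP_three_of_third_eq_zero, projEq_oE_iff]
  refine ⟨by simp [ha, hb], by linear_combination -a ^ 7 * b ^ 4 * hE, rfl⟩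

lemma isTor_two_iff_of_ne_zero {a b c : k} (hc : c ≠ 0) :
    isTor 2 ((a, b, c) : Pt k) ↔ a = b ∧ a ≠ 0 ∧ a ^ 3 ≠ c ^ 3 := by
  rw [isTor, nP_two_of_ne_zero hc, projEq_oE_iff]
  dsimp only
  constructor
  · rintro ⟨hx, hy, hz⟩
    have hb3 : b ^ 3 = a ^ 3 :=
      sub_eq_zero.mp ((mul_eq_zero.mp hz).resolve_left (pow_ne_zero 3 hc))
    have hac : a ^ 3 - c ^ 3 ≠ 0 := right_ne_zero_of_mul hx
    have hab : c ^ 2 * (a ^ 3 - c ^ 3) * (a - b) = 0 := by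
      linear_combination -hy - a * c ^ 2 * hb3
    have hab : a = b := sub_eq_zero.mp ((mul_eq_zero.mp hab).resolve_left
      (mul_ne_zero (pow_ne_zero 2 hc) hac))
    subst hab
    exact ⟨rfl, left_ne_zero_of_mul (left_ne_zero_of_mul hx), sub_ne_zero.mp hac⟩
  · rintro ⟨rfl, ha, hac⟩
    exact ⟨mul_ne_zero (mul_ne_zero ha (pow_ne_zero 2 hc)) (sub_ne_zero.mpr hac),
      by ring, by ring⟩

lemma onHesse_diag_ne_zero {lam a c : k} (hlam : lam ^ 3 ≠ 1) (h3 : (3 : k) ≠ 0)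
    (hc : c ≠ 0) (hE : onHesse lam ((a, a, c) : Pt k)) : a ≠ 0 ∧ a ^ 3 ≠ c ^ 3 := by
  have hE : 2 * a ^ 3 + c ^ 3 - 3 * lam * a ^ 2 * c = 0 := by
    simp only [onHesse] at hE; linear_combination hE
  have ha : a ≠ 0 := by
    rintro rfl
    exact hc ((pow_eq_zero_iff three_ne_zero).mp (by linear_combination hE))
  refine ⟨ha, fun hac => hlam ?_⟩
  have h : 3 * a ^ 2 * (a - lam * c) = 0 := by linear_combination hE + hac
  have h : a = lam * c := sub_eq_zero.mp
    ((mul_eq_zero.mp h).resolve_left (mul_ne_zero h3 (pow_ne_zero 2 ha)))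
  rw [h, mul_pow] at hac
  exact mul_right_cancel₀ (pow_ne_zero 3 hc) (by linear_combination hac)

theorem hesse_two_torsion_iff_general {k : Type*} [Field k] [CharZero k]
    (lam : k) (hlam : lam ^ 3 ≠ 1) (a b c : k)
    (hne : ((a, b, c) : Pt k) ≠ (0, 0, 0))
    (hE : onHesse lam ((a, b, c) : Pt k))
    (h3 : ¬ isTor 3 ((a, b, c) : Pt k)) :
    isTor 2 ((a, b, c) : Pt k) ↔ a = b := by
  have hc : c ≠ 0 := by
    rintro rfl
    exact h3 (isTor_three_of_onHesse_of_third_eq_zero hE hne)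
  rw [isTor_two_iff_of_ne_zero hc]
  refine ⟨And.left, ?_⟩
  rintro rfl
  exact ⟨rfl, onHesse_diag_ne_zero hlam three_ne_zero hc hE⟩

/-- A point `p = (a:b:c)` on the Hesse cubic which is not 3-torsion is
2-torsion if and only if `a = b`. -/
theorem hesse_two_torsion_iff {k : Type*} [Field k] [IsAlgClosed k] [CharZero k]
    (lam : k) (hlam : lam ^ 3 ≠ 1) (a b c : k)
    (hne : ((a, b, c) : Pt k) ≠ (0, 0, 0))
    (hE : onHesse lam ((a, b, c) : Pt k))
    (h3 : ¬ isTor 3 ((a, b, c) : Pt k)) :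
    isTor 2 ((a, b, c) : Pt k) ↔ a = b :=
  hesse_two_torsion_iff_general lam hlam a b c hne hE h3
end
end

section
/- Let E = V(x^3+y^3+z^3) (the Fermat cubic, λ = 0) and let τ2 be the automorphism τ2(a:b:c) = (b:a:cε) where ε is a primitive 3rd root of unity. Then the fixed-point set of τ2 on E is exactly {o_E} where o_E = (1:-1:0). -/
open scoped Classical

noncomputable section

variable {k : Type*} [Field k]

/-- The automorphism `τ₂(a:b:c) = (b:a:cε)` of the Fermat cubic `V(x³+y³+z³)`
(`ε` a primitive 3rd root of unity). -/
def tau2 {k : Type*} [Field k] (eps : k) (p : Pt k) : Pt k := (p.2.1, p.1, p.2.2 * eps)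

/-
Write `p = (a, b, c)`. A fixed point of `τ₂` satisfies `a = tb`, `b = ta`, `c = tεc` for a scalar
`t ≠ 0`. Since `p ≠ 0` lies on the cubic, `a` and `b` cannot both vanish, so `t² = 1`; then
`(tε)² = ε² ≠ 1` forces `c = 0`. On the line `c = 0` the cubic gives `a³(1 + t³) = a³(1 + t) = 0`,
so `t = -1`, i.e. `p = (a : -a : 0) = o_E`.
-/

theorem projEq_oE_iff_s4 {a b c : k} : projEq (a, b, c) oE ↔ a ≠ 0 ∧ b = -a ∧ c = 0 := by
  simp only [projEq, oE, Prod.mk.injEq]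
  constructor
  · rintro ⟨s, hs, h1, h2, h3⟩
    have ha : a ≠ 0 := right_ne_zero_of_mul (h1.symm ▸ one_ne_zero)
    refine ⟨ha, mul_left_cancel₀ hs (by linear_combination -h2 - h1), ?_⟩
    exact (mul_eq_zero.mp h3.symm).resolve_left hs
  · rintro ⟨ha, rfl, rfl⟩
    exact ⟨a⁻¹, inv_ne_zero ha, by field_simp, by field_simp, by simp⟩

theorem sq_eq_one_of_swap_eq_mul {a b c t : k} (hne : (a, b, c) ≠ (0, 0, 0))
    (hE : a ^ 3 + b ^ 3 + c ^ 3 = 0) (ha : a = t * b) (hb : b = t * a) : t ^ 2 = 1 := by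
  by_contra ht
  have ht' : t ^ 2 - 1 ≠ 0 := sub_ne_zero.mpr ht
  have ha0 : a = 0 := (mul_eq_zero.mp (by linear_combination -ha - t * hb)).resolve_left ht'
  have hb0 : b = 0 := by rw [hb, ha0, mul_zero]
  subst ha0 hb0
  exact hne (by simpa using hE)

theorem eq_zero_of_eq_mul_eps {eps t c : k} (heps : IsPrimitiveRoot eps 3) (ht : t ^ 2 = 1)
    (hc : c = t * (c * eps)) : c = 0 := by
  have hte : t * eps ≠ 1 := fun h ↦
    heps.pow_ne_one_of_pos_of_lt (l := 2) two_ne_zero (by norm_num)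
      (by linear_combination h * (t * eps + 1) - eps ^ 2 * ht)
  exact (mul_eq_zero.mp (by linear_combination hc : c * (1 - t * eps) = 0)).resolve_right
    (sub_ne_zero.mpr hte.symm)

theorem eq_neg_one_of_cube_add_cube_eq_zero {a b t : k} (ha0 : a ≠ 0) (hE : a ^ 3 + b ^ 3 = 0)
    (hb : b = t * a) (ht : t ^ 2 = 1) : t = -1 := by
  have h : a ^ 3 * (t + 1) = 0 := by
    linear_combination hE - a ^ 3 * t * ht - (b ^ 2 + b * t * a + t ^ 2 * a ^ 2) * hb
  exact eq_neg_of_add_eq_zero_left ((mul_eq_zero.mp h).resolve_left (pow_ne_zero 3 ha0))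

theorem fermat_tau2_fixed_general {k : Type*} [Field k]
    (eps : k) (heps : IsPrimitiveRoot eps 3)
    (p : Pt k) (hne : p ≠ (0, 0, 0)) (hE : onHesse (0 : k) p) :
    projEq (tau2 eps p) p ↔ projEq p (oE : Pt k) := by
  obtain ⟨a, b, c⟩ := p
  replace hE : a ^ 3 + b ^ 3 + c ^ 3 = 0 := by simpa [onHesse] using hE
  rw [projEq_oE_iff_s4]
  constructor
  · rintro ⟨t, -, h⟩
    simp only [tau2, Prod.mk.injEq] at h
    obtain ⟨ha, hb, hc⟩ := h
    have ht := sq_eq_one_of_swap_eq_mul hne hE ha hb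
    obtain rfl := eq_zero_of_eq_mul_eps heps ht hc
    have ha0 : a ≠ 0 := by
      rintro rfl
      exact hne (by simp [hb])
    obtain rfl := eq_neg_one_of_cube_add_cube_eq_zero ha0 (by simpa using hE) hb ht
    exact ⟨ha0, by simpa using hb, rfl⟩
  · rintro ⟨-, rfl, rfl⟩
    exact ⟨-1, by norm_num, by simp [tau2]⟩

/-- The fixed-point set of `τ₂` on the Fermat cubic `E = V(x³+y³+z³)` is
exactly `{o_E}` where `o_E = (1:-1:0)`. -/
theorem fermat_tau2_fixed {k : Type*} [Field k] [IsAlgClosed k] [CharZero k]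
    (eps : k) (heps : IsPrimitiveRoot eps 3)
    (p : Pt k) (hne : p ≠ (0, 0, 0)) (hE : onHesse (0 : k) p) :
    projEq (tau2 eps p) p ↔ projEq p (oE : Pt k) :=
  fermat_tau2_fixed_general eps heps p hne hE
end
end

section
/- Let E = V(x^3+y^3+z^3-3λxyz) with λ = 1+√3 and let τ3 be the automorphism τ3(a:b:c) = (aε^2+bε+c : aε+bε^2+c : a+b+c), ε a primitive 3rd root of unity. Then the fixed-point set of τ3 on E is the subgroup of order 2 generated by (1:1:1+√3). -/
open scoped Classical

noncomputable section

variable {k : Type*} [Field k]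

/-- The automorphism `τ₃(a:b:c) = (aε²+bε+c : aε+bε²+c : a+b+c)`. -/
def tau3 {k : Type*} [Field k] (eps : k) (p : Pt k) : Pt k :=
  (p.1 * eps ^ 2 + p.2.1 * eps + p.2.2,
   p.1 * eps + p.2.1 * eps ^ 2 + p.2.2,
   p.1 + p.2.1 + p.2.2)

/-!
`τ₃` is linear, with eigenvectors `(1 : -1 : 0)`, `(1 : 1 : 1 + √3)` and `(1 : 1 : 1 - √3)` for the
eigenvalues `ε² - ε`, `√3` and `-√3`; these are pairwise distinct since `(ε² - ε)² = -3`, so the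
three eigenvectors are the only fixed points of `τ₃` on `ℙ²`. The first two lie on `E`, the third
does not.
-/

theorem projEq.symm {p q : Pt k} (h : projEq p q) : projEq q p := by
  obtain ⟨t, ht, rfl⟩ := h
  refine ⟨t⁻¹, inv_ne_zero ht, ?_⟩
  simp only [← mul_assoc, inv_mul_cancel₀ ht, one_mul]

theorem projEq.trans {p q r : Pt k} (hpq : projEq p q) (hqr : projEq q r) : projEq p r := by
  obtain ⟨t, ht, rfl⟩ := hpq
  obtain ⟨u, hu, rfl⟩ := hqr
  exact ⟨u * t, mul_ne_zero hu ht, by simp only [mul_assoc]⟩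

theorem projEq.tau3 {p q : Pt k} (eps : k) (h : projEq p q) :
    projEq (tau3 eps p) (tau3 eps q) := by
  obtain ⟨t, ht, rfl⟩ := h
  refine ⟨t, ht, ?_⟩
  simp only [_root_.tau3, Prod.mk.injEq]
  refine ⟨?_, ?_, ?_⟩ <;> ring

theorem projEq.onHesse {lam : k} {p q : Pt k} (h : projEq p q) (hp : onHesse lam p) :
    onHesse lam q := by
  obtain ⟨t, -, rfl⟩ := h
  unfold _root_.onHesse at hp ⊢
  linear_combination t ^ 3 * hp

theorem IsPrimitiveRoot.sq_add_self_add_one {eps : k} (heps : IsPrimitiveRoot eps 3) :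
    eps ^ 2 + eps + 1 = 0 := by
  have h := heps.geom_sum_eq_zero (by norm_num)
  simp only [Finset.sum_range_succ, Finset.sum_range_zero] at h
  linear_combination h

theorem IsPrimitiveRoot.sq_sub_self_sq {eps : k} (heps : IsPrimitiveRoot eps 3) :
    (eps ^ 2 - eps) ^ 2 = -3 := by
  linear_combination (eps - 2) * heps.pow_eq_one + heps.sq_add_self_add_one

theorem projEq_mul_left {t : k} (ht : t ≠ 0) (p : Pt k) :
    projEq (t * p.1, t * p.2.1, t * p.2.2) p :=
  projEq.symm ⟨t, ht, rfl⟩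

theorem projEq_tau3_oE {eps : k} (heps : IsPrimitiveRoot eps 3) : projEq (tau3 eps oE) oE := by
  have hd : eps ^ 2 - eps ≠ 0 := by
    rw [sq, ← mul_sub_one]
    exact mul_ne_zero (heps.ne_zero (by norm_num)) (sub_ne_zero.mpr (heps.ne_one (by norm_num)))
  convert projEq_mul_left hd oE using 1
  simp only [tau3, oE, Prod.mk.injEq]
  refine ⟨?_, ?_, ?_⟩ <;> ring

theorem projEq_tau3_one_one_one_add [NeZero (3 : k)] {eps s : k} (heps : IsPrimitiveRoot eps 3)
    (hs : s ^ 2 = 3) : projEq (tau3 eps (1, 1, 1 + s)) (1, 1, 1 + s) := by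
  have hs0 : s ≠ 0 := by
    rintro rfl
    exact three_ne_zero (hs.symm.trans (by ring))
  have heq := heps.sq_add_self_add_one
  convert projEq_mul_left hs0 (1, 1, 1 + s) using 1
  simp only [tau3, Prod.mk.injEq]
  exact ⟨by linear_combination heq, by linear_combination heq, by linear_combination -hs⟩

theorem projEq_oE_of_tau3_fixed [NeZero (2 : k)] {eps a b c : k} (heps : IsPrimitiveRoot eps 3)
    (hab : a ≠ b) (h : projEq (tau3 eps (a, b, c)) (a, b, c)) : projEq (a, b, c) oE := by
  obtain ⟨t, ht, h⟩ := h
  simp only [tau3, Prod.mk.injEq] at h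
  obtain ⟨e1, e2, e3⟩ := h
  have heq := heps.sq_add_self_add_one
  have ht3 : t * (eps ^ 2 - eps) = 1 :=
    mul_left_cancel₀ (sub_ne_zero.mpr hab) (by linear_combination e2 - e1)
  have ht2 : 3 * t ^ 2 = -1 := by
    linear_combination t ^ 2 * heps.sq_sub_self_sq - (t * (eps ^ 2 - eps) + 1) * ht3
  have hc : c = 0 := by
    have h2c : 2 * c = 0 := by
      linear_combination (1 + t) * e3 + t * (e1 + e2 + t * (a + b) * heq) + c * ht2
    exact (mul_eq_zero.mp h2c).resolve_left two_ne_zero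
  have hb : b = -a := by
    subst hc
    linear_combination (mul_eq_zero.mp e3.symm).resolve_left ht
  have ha : a ≠ 0 := by
    rintro rfl
    exact hab (by simp [hb])
  subst hb hc
  convert projEq_mul_left ha oE using 1
  simp [oE]

theorem projEq_one_one_of_tau3_fixed {eps s a c : k} (heps : IsPrimitiveRoot eps 3)
    (hs : s ^ 2 = 3) (hp : (a, a, c) ≠ ((0, 0, 0) : Pt k))
    (h : projEq (tau3 eps (a, a, c)) (a, a, c)) :
    projEq (a, a, c) (1, 1, 1 + s) ∨ projEq (a, a, c) (1, 1, 1 - s) := by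
  obtain ⟨t, ht, h⟩ := h
  simp only [tau3, Prod.mk.injEq] at h
  obtain ⟨e1, -, e3⟩ := h
  have e1' : a = t * (c - a) := by linear_combination e1 + t * a * heps.sq_add_self_add_one
  have ha : a ≠ 0 := by
    rintro rfl
    have hc : c = 0 := by simpa [ht] using e1'
    exact hp (by simp [hc])
  -- `1 / t` is an eigenvalue of `τ₃` on the plane `a = b`, where it acts by `[[-1, 1], [2, 1]]`.
  have hst : (s * t - 1) * (s * t + 1) = 0 :=
    mul_left_cancel₀ ha (by linear_combination a * t ^ 2 * hs - (1 - t) * e1' - t * e3)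
  rcases mul_eq_zero.mp hst with hst | hst
  · left
    convert projEq_mul_left ha (1, 1, 1 + s) using 1
    simp only [Prod.mk.injEq]
    exact ⟨by ring, by ring, by linear_combination (a - c) * hst - s * e1'⟩
  · right
    convert projEq_mul_left ha (1, 1, 1 - s) using 1
    simp only [Prod.mk.injEq]
    exact ⟨by ring, by ring, by linear_combination (c - a) * hst + s * e1'⟩

theorem not_onHesse_one_one_one_sub [NeZero (2 : k)] [NeZero (3 : k)] {s : k} (hs : s ^ 2 = 3) :
    ¬ onHesse (1 + s) ((1, 1, 1 - s) : Pt k) := by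
  intro h
  simp only [onHesse] at h
  -- `h` says `18 - 6 s = 0`, and `(3 + s) (18 - 6 s) = 36`.
  have h36 : (2 : k) ^ 2 * 3 ^ 2 = 0 := by
    linear_combination (3 + s) * h + ((3 + s) * (s - 6) + 6) * hs
  exact mul_ne_zero (pow_ne_zero 2 two_ne_zero) (pow_ne_zero 2 three_ne_zero) h36

theorem hesse_tau3_fixed_general {k : Type*} [Field k] [CharZero k]
    (eps s : k) (heps : IsPrimitiveRoot eps 3) (hs : s ^ 2 = 3)
    (p : Pt k) (hne : p ≠ (0, 0, 0)) (hE : onHesse (1 + s) p) :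
    projEq (tau3 eps p) p ↔
      (projEq p (oE : Pt k) ∨ projEq p ((1, 1, 1 + s) : Pt k)) := by
  constructor
  · intro hfix
    obtain ⟨a, b, c⟩ := p
    rcases eq_or_ne a b with rfl | hab
    · rcases projEq_one_one_of_tau3_fixed heps hs hne hfix with h | h
      · exact .inr h
      · exact absurd (h.onHesse hE) (not_onHesse_one_one_one_sub hs)
    · exact .inl (projEq_oE_of_tau3_fixed heps hab hfix)
  · rintro (h | h)
    · exact ((h.tau3 eps).trans (projEq_tau3_oE heps)).trans h.symm
    · exact ((h.tau3 eps).trans (projEq_tau3_one_one_one_add heps hs)).trans h.symm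

/-- For the Hesse cubic with `λ = 1 + √3`, the fixed-point set of `τ₃` on `E`
is the subgroup of order 2 generated by `(1:1:1+√3)`, i.e.
`{o_E, (1:1:1+√3)}`. -/
theorem hesse_tau3_fixed {k : Type*} [Field k] [IsAlgClosed k] [CharZero k]
    (eps s : k) (heps : IsPrimitiveRoot eps 3) (hs : s ^ 2 = 3)
    (p : Pt k) (hne : p ≠ (0, 0, 0)) (hE : onHesse (1 + s) p) :
    projEq (tau3 eps p) p ↔
      (projEq p (oE : Pt k) ∨ projEq p ((1, 1, 1 + s) : Pt k)) :=
  hesse_tau3_fixed_general eps s heps hs p hne hE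
end
end

section
/- Let E be an elliptic curve with a group automorphism τ and i ≥ 0 such that the fixed subgroup E_{τ^i} = {p : τ^i(p) = p} is contained in E[2]. Then U_{τ^i} := {p ∈ E : p - τ^i(p) ∈ E[3]} equals the internal direct sum E_{τ^i} ⊕ E[3]. -/
/-!
Write `1 = u m + v n` with `m = 2`, `n = 3`. A point killed by both `m` and `n` is then `0`.
If `n (p - σ p) = 0`, then `n p` is fixed by `σ`, hence killed by `m`, so
`p = v (n p) + u (m p)` splits into a fixed point and a point killed by `n`.
-/

section CoprimeTorsion

variable {E F : Type*} [AddCommGroup E] [FunLike F E E] [AddMonoidHomClass F E E] {m n : ℕ}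

theorem zsmul_nsmul_add_zsmul_nsmul_eq_self {u v : ℤ} (huv : u * m + v * n = 1) (p : E) :
    u • m • p + v • n • p = p := by
  rw [← natCast_zsmul, ← natCast_zsmul, smul_smul, smul_smul, ← add_zsmul, huv, one_zsmul]

theorem eq_zero_of_nsmul_eq_zero_of_coprime (hmn : m.Coprime n) {p : E}
    (hm : m • p = 0) (hn : n • p = 0) : p = 0 := by
  obtain ⟨u, v, huv⟩ := Nat.isCoprime_iff_coprime.mpr hmn
  rw [← zsmul_nsmul_add_zsmul_nsmul_eq_self huv p, hm, hn, smul_zero, smul_zero, add_zero]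

theorem exists_fixed_add_torsion_of_nsmul_sub_eq_zero (σ : F) (hmn : m.Coprime n)
    (hfix : ∀ p, σ p = p → m • p = 0) {p : E} (hp : n • (p - σ p) = 0) :
    ∃ q r, σ q = q ∧ n • r = 0 ∧ p = q + r := by
  obtain ⟨u, v, huv⟩ := Nat.isCoprime_iff_coprime.mpr hmn
  have hnp : σ (n • p) = n • p := by
    rw [map_nsmul, eq_comm, ← sub_eq_zero, ← nsmul_sub, hp]
  refine ⟨v • n • p, u • m • p, by rw [map_zsmul, hnp], ?_, ?_⟩
  · rw [smul_comm n u, smul_comm n m, hfix _ hnp, smul_zero]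
  · rw [add_comm, zsmul_nsmul_add_zsmul_nsmul_eq_self huv]

theorem nsmul_sub_map_eq_zero_of_fixed_add_torsion (σ : F) {q r : E} (hq : σ q = q)
    (hr : n • r = 0) : n • ((q + r) - σ (q + r)) = 0 := by
  rw [map_add, hq, add_sub_add_left_eq_sub, nsmul_sub, ← map_nsmul, hr, map_zero, sub_zero]

end CoprimeTorsion

/-- Let `E` be an elliptic curve (an abelian group) with a group automorphism
`τ`, and `i ≥ 0` such that the fixed subgroup `E_{τ^i}` is contained in `E[2]`.
Then `U_{τ^i} = {p : p - τ^i(p) ∈ E[3]}` is the internal direct sum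
`E_{τ^i} ⊕ E[3]`: the two subgroups intersect trivially and `U_{τ^i}` is their
sum. -/
theorem U_eq_fixed_directSum_threeTorsion {E : Type*} [AddCommGroup E]
    (τ : AddAut E) (i : ℕ) (hfix : ∀ p : E, (i • τ) p = p → 2 • p = 0) :
    (∀ p : E, (i • τ) p = p → 3 • p = 0 → p = 0) ∧
    {p : E | p - (i • τ) p ∈ {q : E | 3 • q = 0}} =
      {p : E | ∃ q r : E, (i • τ) q = q ∧ 3 • r = 0 ∧ p = q + r} := by
  have h23 : Nat.Coprime 2 3 := by norm_num
  refine ⟨fun p hp h3 => eq_zero_of_nsmul_eq_zero_of_coprime h23 (hfix p hp) h3, ?_⟩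
  ext p
  constructor
  · exact exists_fixed_add_torsion_of_nsmul_sub_eq_zero (i • τ) h23 hfix
  · rintro ⟨q, r, hq, hr, rfl⟩
    exact nsmul_sub_map_eq_zero_of_fixed_add_torsion (i • τ) hq hr
end

section
/- Let E = V(x^3+y^3+z^3) and τ2(a:b:c) = (b:a:cε), ε a primitive 3rd root of unity. Then U_{τ2} := {p ∈ E : p - τ2(p) ∈ E[3]} equals E[3]. -/
open scoped Classical

noncomputable section

variable {k : Type*} [Field k]

/-! On the Fermat cubic, with zero `o_E = (1 : -1 : 0)`, a point `p = (a : b : c)` is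
`3`-torsion iff `abc = 0`. Indeed `o_E + p` is a multiple of `p`, and `2p` is represented by
`(b(a³ - c³), a(c³ - b³), c(b³ - a³))`: when `abc = 0` this is a multiple of `-p = (b : a : c)`,
so `3p = -p + p = o_E`; when `abc ≠ 0` the first two coordinates of the chord formula for
`2p + p` add up to `9a³b³c⁴ ≠ 0`, so `3p ≠ o_E`. The chord formulas preserve the curve, and
`p - τ₂ p` is `(b : a : cε²)` when `abc ≠ 0` and has a vanishing coordinate when `abc = 0`;
so both sides of the equivalence say `abc = 0`. -/
lemma add1_smul_left (t : k) (p q : Pt k) : add1 (t • p) q = t ^ 2 • add1 p q := by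
  obtain ⟨a, b, c⟩ := p
  simp only [add1, Prod.smul_mk, smul_eq_mul]
  ext <;> ring

lemma add2_smul_left (t : k) (p q : Pt k) : add2 (t • p) q = t ^ 2 • add2 p q := by
  obtain ⟨a, b, c⟩ := p
  simp only [add2, Prod.smul_mk, smul_eq_mul]
  ext <;> ring

lemma hesseAdd_eq_add1 {p q : Pt k} (h : add1 p q ≠ 0) : hesseAdd p q = add1 p q := if_pos h

lemma hesseAdd_eq_add2 {p q : Pt k} (h : add1 p q = 0) : hesseAdd p q = add2 p q :=
  if_neg (not_not.2 h)

lemma hesseAdd_smul_left {t : k} (ht : t ≠ 0) (p q : Pt k) :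
    hesseAdd (t • p) q = t ^ 2 • hesseAdd p q := by
  by_cases h : add1 p q = 0
  · rw [hesseAdd_eq_add2 h, hesseAdd_eq_add2 (by rw [add1_smul_left, h, smul_zero]),
      add2_smul_left]
  · have h' : add1 (t • p) q ≠ 0 := by
      rw [add1_smul_left]
      exact smul_ne_zero (pow_ne_zero 2 ht) h
    rw [hesseAdd_eq_add1 h, hesseAdd_eq_add1 h', add1_smul_left]

lemma add1_self (p : Pt k) : add1 p p = 0 := by
  obtain ⟨a, b, c⟩ := p
  simp only [add1]
  ext <;> simp only [Prod.fst_zero, Prod.snd_zero] <;> ring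

lemma hesseAdd_self (p : Pt k) :
    hesseAdd p p = (p.2.1 * (p.1 ^ 3 - p.2.2 ^ 3), p.1 * (p.2.2 ^ 3 - p.2.1 ^ 3),
      p.2.2 * (p.2.1 ^ 3 - p.1 ^ 3)) := by
  rw [hesseAdd_eq_add2 (add1_self p)]
  ext <;> simp only [add2] <;> ring

lemma projEq_iff (p q : Pt k) : projEq p q ↔ ∃ t : k, t ≠ 0 ∧ q = t • p := Iff.rfl

lemma projEq_smul_left {s : k} (hs : s ≠ 0) (p q : Pt k) : projEq (s • p) q ↔ projEq p q := by
  simp only [projEq_iff, smul_smul]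
  constructor
  · rintro ⟨t, ht, rfl⟩
    exact ⟨t * s, mul_ne_zero ht hs, rfl⟩
  · rintro ⟨t, ht, rfl⟩
    exact ⟨t * s⁻¹, mul_ne_zero ht (inv_ne_zero hs), by rw [mul_assoc, inv_mul_cancel₀ hs, mul_one]⟩

lemma projEq_smul_self {s : k} (hs : s ≠ 0) (p : Pt k) : projEq (s • p) p :=
  (projEq_smul_left hs p p).2 ⟨1, one_ne_zero, (one_smul k p).symm⟩

section Closure

variable {lam : k} {p q : Pt k}

-- With `F = x³ + y³ + z³ - 3λxyz`, the cofactors are the quotients of `F(add1 p q)` on division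
-- by the Gröbner basis `{F(p), F(q)}`.
lemma onHesse_add1 (hp : onHesse lam p) (hq : onHesse lam q) : onHesse lam (add1 p q) := by
  obtain ⟨a, b, c⟩ := p
  obtain ⟨x, y, z⟩ := q
  unfold onHesse add1 at *
  linear_combination (c^3*y^3*z^3 + c^3*y^6 - 3*c^3*x*y^4*z*lam + b^3*z^6 + b^3*y^3*z^3
      - 3*b^3*x*y*z^4*lam + 3*a*b*c*x^2*y^2*z^2 - a^3*y^3*z^3) * hp
    + (-c^6*y^3 - b^3*c^3*z^3 - b^3*c^3*y^3 + b^3*c^3*x^3 - b^6*z^3 + 3*a*b*c^4*y^3*lam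
      + 3*a*b^4*c*z^3*lam - 3*a^2*b^2*c^2*x*y*z) * hq

lemma onHesse_add2 (hp : onHesse lam p) (hq : onHesse lam q) : onHesse lam (add2 p q) := by
  obtain ⟨a, b, c⟩ := p
  obtain ⟨x, y, z⟩ := q
  unfold onHesse add2 at *
  linear_combination (c^3*z^6 - 3*c^3*x*y*z^4*lam + c^3*x^3*z^3 + b^3*x^3*z^3
      - 3*b^3*x^4*y*z*lam + b^3*x^6 + 3*a*b*c*x^2*y^2*z^2 - a^3*x^3*z^3) * hp
    + (-c^6*z^3 - b^3*c^3*z^3 + b^3*c^3*y^3 - b^3*c^3*x^3 - b^6*x^3 + 3*a*b*c^4*z^3*lam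
      + 3*a*b^4*c*x^3*lam - 3*a^2*b^2*c^2*x*y*z) * hq

lemma onHesse_hesseAdd (hp : onHesse lam p) (hq : onHesse lam q) : onHesse lam (hesseAdd p q) := by
  unfold hesseAdd
  split_ifs
  exacts [onHesse_add1 hp hq, onHesse_add2 hp hq]

lemma onHesse_hesseNeg (hp : onHesse lam p) : onHesse lam (hesseNeg p) := by
  unfold onHesse hesseNeg at *
  linear_combination hp

lemma onHesse_hesseSub (hp : onHesse lam p) (hq : onHesse lam q) : onHesse lam (hesseSub p q) :=
  onHesse_hesseAdd hp (onHesse_hesseNeg hq)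

lemma onHesse_tau2 {eps : k} (heps : eps ^ 3 = 1) (hp : onHesse 0 p) : onHesse 0 (tau2 eps p) := by
  unfold onHesse tau2 at *
  linear_combination hp + p.2.2 ^ 3 * heps

end Closure

lemma ne_zero_and_ne_zero_of_pow_three_add_pow_three {y z : k} (h : y ^ 3 + z ^ 3 = 0)
    (hyz : ¬(y = 0 ∧ z = 0)) : y ≠ 0 ∧ z ≠ 0 := by
  constructor <;> rintro rfl <;> simp_all

lemma exists_hesseAdd_oE_left_eq_smul {lam : k} {p : Pt k} (hp : onHesse lam p) (hne : p ≠ 0) :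
    ∃ s : k, s ≠ 0 ∧ hesseAdd oE p = s • p := by
  obtain ⟨a, b, c⟩ := p
  by_cases hc : c = 0
  · subst hc
    have hab : a ^ 3 + b ^ 3 = 0 := by simpa [onHesse] using hp
    have ha := (ne_zero_and_ne_zero_of_pow_three_add_pow_three hab (by simpa using hne)).1
    refine ⟨-a, neg_ne_zero.2 ha, ?_⟩
    rw [hesseAdd_eq_add2 (by simp [add1, oE])]
    simp only [add2, oE, Prod.smul_mk, smul_eq_mul]
    ext <;> simp only <;> ring
  · have h1 : add1 oE (a, b, c) = (-c) • (a, b, c) := by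
      simp only [add1, oE, Prod.smul_mk, smul_eq_mul]
      ext <;> simp only <;> ring
    refine ⟨-c, neg_ne_zero.2 hc, ?_⟩
    rw [hesseAdd_eq_add1 (by rw [h1]; exact smul_ne_zero (neg_ne_zero.2 hc) hne), h1]

lemma isTor_three_iff_projEq_oE {lam : k} {p : Pt k} (hp : onHesse lam p) (hne : p ≠ 0) :
    isTor 3 p ↔ projEq (hesseAdd (hesseAdd p p) p) oE := by
  obtain ⟨s, hs, h1⟩ := exists_hesseAdd_oE_left_eq_smul hp hne
  show projEq (hesseAdd (hesseAdd (hesseAdd oE p) p) p) oE ↔ _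
  rw [h1, hesseAdd_smul_left hs, hesseAdd_smul_left (pow_ne_zero 2 hs),
    projEq_smul_left (pow_ne_zero 2 (pow_ne_zero 2 hs))]

lemma projEq_hesseAdd_hesseNeg_self_oE (h3 : (3 : k) ≠ 0) {p : Pt k} (hp : onHesse 0 p)
    (hne : p ≠ 0) : projEq (hesseAdd (hesseNeg p) p) oE := by
  obtain ⟨a, b, c⟩ := p
  have h1 : add1 (hesseNeg (a, b, c)) (a, b, c) = (c * (b ^ 3 - a ^ 3)) • oE := by
    simp only [add1, hesseNeg, oE, Prod.smul_mk, smul_eq_mul]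
    ext <;> simp only <;> ring
  have h2 : add2 (hesseNeg (a, b, c)) (a, b, c) = (b * (a ^ 3 - c ^ 3)) • oE := by
    simp only [add2, hesseNeg, oE, Prod.smul_mk, smul_eq_mul]
    ext <;> simp only <;> ring
  have hoE : (oE : Pt k) ≠ 0 := by simp [oE]
  by_cases hs : c * (b ^ 3 - a ^ 3) = 0
  · rw [hesseAdd_eq_add2 (by rw [h1, hs, zero_smul]), h2]
    refine projEq_smul_self (fun hs' => hne ?_) oE
    have hp' : a ^ 3 + b ^ 3 + c ^ 3 = 0 := by simpa [onHesse] using hp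
    have ha : a ^ 3 = 0 := by
      rcases mul_eq_zero.1 hs with hc | hba <;> rcases mul_eq_zero.1 hs' with hb | hac
      · linear_combination hp' - b ^ 2 * hb - c ^ 2 * hc
      · linear_combination hac + c ^ 2 * hc
      · linear_combination b ^ 2 * hb - hba
      · have h3a : 3 * a ^ 3 = 0 := by linear_combination hp' - hba + hac
        exact (mul_eq_zero.1 h3a).resolve_left h3
    have hc : c ^ 6 = 0 := by
      linear_combination c ^ 3 * hp' + b ^ 2 * hs' - (c ^ 3 + b ^ 3) * ha
    have ha0 : a = 0 := eq_zero_of_pow_eq_zero ha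
    have hc0 : c = 0 := eq_zero_of_pow_eq_zero hc
    have hb0 : b = 0 := by simpa [ha0, hc0] using hp'
    simp [ha0, hb0, hc0]
  · rw [hesseAdd_eq_add1 (by rw [h1]; exact smul_ne_zero hs hoE), h1]
    exact projEq_smul_self hs oE

lemma coord_cases_of_mul_eq_zero {p : Pt k} (hp : onHesse 0 p) (hne : p ≠ 0)
    (habc : p.1 * p.2.1 * p.2.2 = 0) :
    (p.1 = 0 ∧ p.2.1 ≠ 0 ∧ p.2.2 ≠ 0) ∨ (p.1 ≠ 0 ∧ p.2.1 = 0 ∧ p.2.2 ≠ 0) ∨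
      (p.1 ≠ 0 ∧ p.2.1 ≠ 0 ∧ p.2.2 = 0) := by
  obtain ⟨a, b, c⟩ := p
  have hp' : a ^ 3 + b ^ 3 + c ^ 3 = 0 := by simpa [onHesse] using hp
  simp only at habc ⊢
  rcases mul_eq_zero.1 habc with hab | hc
  · rcases mul_eq_zero.1 hab with ha | hb
    · subst ha
      exact .inl ⟨rfl, ne_zero_and_ne_zero_of_pow_three_add_pow_three (by simpa using hp')
        (by simpa using hne)⟩
    · subst hb
      obtain ⟨ha, hc⟩ := ne_zero_and_ne_zero_of_pow_three_add_pow_three (by simpa using hp')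
        (by simpa using hne)
      exact .inr (.inl ⟨ha, rfl, hc⟩)
  · subst hc
    obtain ⟨ha, hb⟩ := ne_zero_and_ne_zero_of_pow_three_add_pow_three (by simpa using hp')
      (by simpa using hne)
    exact .inr (.inr ⟨ha, hb, rfl⟩)

lemma exists_hesseAdd_self_eq_smul_hesseNeg {p : Pt k} (hp : onHesse 0 p) (hne : p ≠ 0)
    (habc : p.1 * p.2.1 * p.2.2 = 0) : ∃ μ : k, μ ≠ 0 ∧ hesseAdd p p = μ • hesseNeg p := by
  have hcases := coord_cases_of_mul_eq_zero hp hne habc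
  obtain ⟨a, b, c⟩ := p
  have hp' : a ^ 3 + b ^ 3 + c ^ 3 = 0 := by simpa [onHesse] using hp
  simp only [hesseAdd_self, hesseNeg] at hcases ⊢
  rcases hcases with ⟨rfl, hb, -⟩ | ⟨-, rfl, hc⟩ | ⟨ha, -, rfl⟩
  · refine ⟨b ^ 3, pow_ne_zero 3 hb, ?_⟩
    rw [show c ^ 3 = -b ^ 3 by linear_combination hp']
    ext <;> simp only [Prod.smul_mk, smul_eq_mul] <;> ring
  · refine ⟨c ^ 3, pow_ne_zero 3 hc, ?_⟩
    rw [show a ^ 3 = -c ^ 3 by linear_combination hp']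
    ext <;> simp only [Prod.smul_mk, smul_eq_mul] <;> ring
  · refine ⟨a ^ 3, pow_ne_zero 3 ha, ?_⟩
    rw [show b ^ 3 = -a ^ 3 by linear_combination hp']
    ext <;> simp only [Prod.smul_mk, smul_eq_mul] <;> ring

lemma not_projEq_hesseAdd_hesseAdd_self_oE (h3 : (3 : k) ≠ 0) {p : Pt k} (hp : onHesse 0 p)
    (habc : p.1 * p.2.1 * p.2.2 ≠ 0) : ¬ projEq (hesseAdd (hesseAdd p p) p) oE := by
  obtain ⟨a, b, c⟩ := p
  rw [hesseAdd_self]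
  set r := add1 (b * (a ^ 3 - c ^ 3), a * (c ^ 3 - b ^ 3), c * (b ^ 3 - a ^ 3)) (a, b, c) with hr
  have hsum : r.1 + r.2.1 = 9 * a ^ 3 * b ^ 3 * c ^ 4 := by
    simp only [hr, add1]
    unfold onHesse at hp
    linear_combination (-(a ^ 3 * c ^ 4) - b ^ 3 * c ^ 4 - a ^ 3 * b ^ 3 * c) * hp
  have h9 : 9 * a ^ 3 * b ^ 3 * c ^ 4 ≠ 0 := by
    have h9 : (9 : k) ≠ 0 := by simpa [show (9 : k) = 3 * 3 by norm_num] using mul_ne_zero h3 h3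
    simp only [ne_eq, mul_eq_zero, not_or] at habc
    obtain ⟨⟨ha, hb⟩, hc⟩ := habc
    exact mul_ne_zero (mul_ne_zero (mul_ne_zero h9 (pow_ne_zero 3 ha)) (pow_ne_zero 3 hb))
      (pow_ne_zero 4 hc)
  rw [hesseAdd_eq_add1 (fun h => h9 (by rw [← hsum, hr, h]; simp))]
  rintro ⟨t, ht, heq⟩
  have h1 : (1 : k) = t * r.1 := congrArg Prod.fst heq
  have h2 : (-1 : k) = t * r.2.1 := congrArg (fun p => p.2.1) heq
  exact mul_ne_zero ht h9 (by linear_combination -h1 - h2 - t * hsum)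

theorem isTor_three_iff_mul_eq_zero (h3 : (3 : k) ≠ 0) {p : Pt k} (hp : onHesse 0 p)
    (hne : p ≠ 0) : isTor 3 p ↔ p.1 * p.2.1 * p.2.2 = 0 := by
  rw [isTor_three_iff_projEq_oE hp hne]
  refine ⟨fun h => by_contra fun habc => not_projEq_hesseAdd_hesseAdd_self_oE h3 hp habc h,
    fun habc => ?_⟩
  obtain ⟨μ, hμ, hdouble⟩ := exists_hesseAdd_self_eq_smul_hesseNeg hp hne habc
  rw [hdouble, hesseAdd_smul_left hμ, projEq_smul_left (pow_ne_zero 2 hμ)]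
  exact projEq_hesseAdd_hesseNeg_self_oE h3 hp hne

section Tau2

variable {eps : k}

lemma add1_hesseNeg_tau2 (heps : eps ^ 3 = 1) (p : Pt k) :
    add1 p (hesseNeg (tau2 eps p)) = (p.1 * p.2.1 * p.2.2 * (1 - eps)) • tau2 (eps ^ 2) p := by
  obtain ⟨a, b, c⟩ := p
  ext <;> simp only [add1, hesseNeg, tau2, Prod.smul_mk, smul_eq_mul]
  · ring
  · ring
  · linear_combination a * b * c ^ 2 * heps

lemma hesseSub_tau2_of_mul_ne_zero (heps : IsPrimitiveRoot eps 3) {p : Pt k}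
    (habc : p.1 * p.2.1 * p.2.2 ≠ 0) :
    hesseSub p (tau2 eps p) = (p.1 * p.2.1 * p.2.2 * (1 - eps)) • tau2 (eps ^ 2) p := by
  have hm : p.1 * p.2.1 * p.2.2 * (1 - eps) ≠ 0 :=
    mul_ne_zero habc (sub_ne_zero.2 (heps.ne_one (by norm_num)).symm)
  have htau : tau2 (eps ^ 2) p ≠ 0 := fun h =>
    habc (by simp [show p.2.1 = 0 from congrArg Prod.fst h])
  rw [← add1_hesseNeg_tau2 heps.pow_eq_one]
  exact hesseAdd_eq_add1 (by rw [add1_hesseNeg_tau2 heps.pow_eq_one]; exact smul_ne_zero hm htau)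

lemma hesseSub_tau2_of_mul_eq_zero (heps : eps ^ 3 = 1) {p : Pt k}
    (habc : p.1 * p.2.1 * p.2.2 = 0) :
    hesseSub p (tau2 eps p) = (p.2.1 * (p.1 ^ 3 - p.2.2 ^ 3 * eps),
      p.1 * (p.2.2 ^ 3 * eps ^ 2 - p.2.1 ^ 3), p.2.2 * (p.2.1 ^ 3 - p.1 ^ 3 * eps)) := by
  rw [hesseSub, hesseAdd_eq_add2 (by rw [add1_hesseNeg_tau2 heps, habc, zero_mul, zero_smul])]
  ext <;> simp only [add2, hesseNeg, tau2] <;> ring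

lemma hesseSub_tau2_mul_eq_zero_iff (heps : IsPrimitiveRoot eps 3) (p : Pt k) :
    (hesseSub p (tau2 eps p)).1 * (hesseSub p (tau2 eps p)).2.1 * (hesseSub p (tau2 eps p)).2.2
      = 0 ↔ p.1 * p.2.1 * p.2.2 = 0 := by
  by_cases habc : p.1 * p.2.1 * p.2.2 = 0
  · rw [hesseSub_tau2_of_mul_eq_zero heps.pow_eq_one habc]
    obtain ⟨a, b, c⟩ := p
    refine iff_of_true ?_ habc
    linear_combination
      (a ^ 3 - c ^ 3 * eps) * (c ^ 3 * eps ^ 2 - b ^ 3) * (b ^ 3 - a ^ 3 * eps) * habc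
  · rw [hesseSub_tau2_of_mul_ne_zero heps habc]
    obtain ⟨a, b, c⟩ := p
    refine iff_of_false ?_ habc
    simp_all [tau2, sub_eq_zero, heps.ne_zero, (heps.ne_one (by norm_num)).symm]

lemma hesseSub_tau2_ne_zero (heps : IsPrimitiveRoot eps 3) {p : Pt k} (hp : onHesse 0 p)
    (hne : p ≠ 0) : hesseSub p (tau2 eps p) ≠ 0 := by
  by_cases habc : p.1 * p.2.1 * p.2.2 = 0
  · rw [hesseSub_tau2_of_mul_eq_zero heps.pow_eq_one habc]
    rcases coord_cases_of_mul_eq_zero hp hne habc with ⟨ha, hb, hc⟩ | ⟨ha, hb, hc⟩ | ⟨ha, hb, hc⟩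
      <;> simp [ha, hb, hc, heps.ne_zero]
  · intro h
    apply habc
    rw [← hesseSub_tau2_mul_eq_zero_iff heps p, h]
    simp

end Tau2

theorem fermat_U_tau2_eq_threeTorsion_general {k : Type*} [Field k]
    (eps : k) (heps : IsPrimitiveRoot eps 3)
    (p : Pt k) (hne : p ≠ (0, 0, 0)) (hE : onHesse (0 : k) p) :
    isTor 3 (hesseSub p (tau2 eps p)) ↔ isTor 3 p := by
  have h3 : (3 : k) ≠ 0 := by exact_mod_cast heps.neZero'.out
  rw [isTor_three_iff_mul_eq_zero h3 hE hne,
    isTor_three_iff_mul_eq_zero h3 (onHesse_hesseSub hE (onHesse_tau2 heps.pow_eq_one hE))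
      (hesseSub_tau2_ne_zero heps hE hne)]
  exact hesseSub_tau2_mul_eq_zero_iff heps p

/-- For the Fermat cubic `E = V(x³+y³+z³)` and `τ₂(a:b:c) = (b:a:cε)`,
`U_{τ₂} = {p ∈ E : p - τ₂(p) ∈ E[3]}` equals `E[3]`. -/
theorem fermat_U_tau2_eq_threeTorsion {k : Type*} [Field k] [IsAlgClosed k] [CharZero k]
    (eps : k) (heps : IsPrimitiveRoot eps 3)
    (p : Pt k) (hne : p ≠ (0, 0, 0)) (hE : onHesse (0 : k) p) :
    isTor 3 (hesseSub p (tau2 eps p)) ↔ isTor 3 p :=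
  fermat_U_tau2_eq_threeTorsion_general eps heps p hne hE
end
end
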